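/- arXiv:2404.17491 — 4 statements merged into one kernel-verified Lean document; each statement's English description precedes it below -/
import Mathlib

section
/- Let V ~ Unif(0,1), Λ ~ Unif(0,2π), and W a real random variable, all independent, and let Z₁, Z₂ be real random variables independent of (V,Λ,W) with Z₁ − Z₂ Gaussian with mean 0 and variance d. Define Y_i = √(−2 ln V) · cos(Z_i W + Λ) for i = 1, 2. Then E[Y_i] = 0, E[Y_i²] = 1, and E[Y₁ Y₂] = E[exp(−d W²/2)]. -/
/-!
The random phase does all the work: for `Λ` uniform on `(0, 2π)` and `A` independent of `Λ`,
`E[cos (A + nΛ)] = 0` for every `n ≠ 0` (expand by the addition formula and factor by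
independence). Hence `E[Y i] = 0`, and by `cos u cos v = (cos (u - v) + cos (u + v)) / 2` the
second moments reduce to `E[R²] E[cos ((Z₁ - Z₂) W)] / 2` with `R = √(-2 ln V)` independent of the
rest and `E[R²] = E[-2 ln V] = 2`. Finally `E[cos ((Z₁ - Z₂) W)] = E[exp (-d W² / 2)]` by Fubini
over the product law of `(Z₁ - Z₂, W)` and the real part of the Gaussian characteristic function.
-/

open MeasureTheory ProbabilityTheory Real
open scoped NNReal ENNReal

lemma intervalIntegral_cos_nat_mul_zero_two_pi {n : ℕ} (hn : n ≠ 0) :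
    ∫ y in (0 : ℝ)..2 * π, cos (n * y) = 0 := by
  rw [intervalIntegral.integral_comp_mul_left (fun y => cos y) (Nat.cast_ne_zero.mpr hn),
    integral_cos, mul_zero, sin_zero, sub_zero, ← mul_assoc, mul_comm (n : ℝ) 2]
  exact_mod_cast smul_eq_zero_of_right _ (sin_nat_mul_pi (2 * n))

lemma intervalIntegral_sin_nat_mul_zero_two_pi {n : ℕ} (hn : n ≠ 0) :
    ∫ y in (0 : ℝ)..2 * π, sin (n * y) = 0 := by
  rw [intervalIntegral.integral_comp_mul_left (fun y => sin y) (Nat.cast_ne_zero.mpr hn),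
    integral_sin, mul_zero, cos_zero, cos_nat_mul_two_pi, sub_self, smul_zero]

lemma setIntegral_Ioo_zero_one_log : ∫ v in Set.Ioo (0 : ℝ) 1, log v = -1 := by
  rw [← integral_Ioc_eq_integral_Ioo, ← intervalIntegral.integral_of_le zero_le_one, integral_log]
  simp

lemma integral_cos_mul_eq_re_charFun (μ : Measure ℝ) [IsFiniteMeasure μ] (t : ℝ) :
    ∫ x, cos (t * x) ∂μ = (charFun μ t).re := by
  have hint : Integrable (fun x : ℝ => Complex.exp (t * x * Complex.I)) μ :=
    .of_bound (by fun_prop) 1 (ae_of_all _ fun x => by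
      rw [← Complex.ofReal_mul, Complex.norm_exp_ofReal_mul_I])
  rw [charFun_apply_real, ← Complex.reCLM_apply, ← Complex.reCLM.integral_comp_comm hint]
  simp_rw [Complex.reCLM_apply, ← Complex.ofReal_mul, Complex.exp_ofReal_mul_I_re]

lemma integral_cos_mul_gaussianReal (v : ℝ≥0) (t : ℝ) :
    ∫ x, cos (t * x) ∂gaussianReal 0 v = exp (-(v * t ^ 2) / 2) := by
  rw [integral_cos_mul_eq_re_charFun, charFun_gaussianReal, Complex.ofReal_zero, mul_zero,
    zero_mul, zero_sub, neg_div]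
  norm_cast

section

variable {Ω : Type*} [MeasurableSpace Ω] {μ : Measure Ω}

lemma integral_sqrt_neg_two_mul_log_sq {V : Ω → ℝ} (hV : AEMeasurable V μ)
    (hVlaw : μ.map V = volume.restrict (Set.Ioo 0 1)) :
    ∫ x, √(-2 * log (V x)) ^ 2 ∂μ = 2 := by
  rw [← integral_map (f := fun v => √(-2 * log v) ^ 2) hV (by fun_prop), hVlaw,
    setIntegral_congr_fun measurableSet_Ioo fun v hv =>
      sq_sqrt (by nlinarith [log_nonpos hv.1.le hv.2.le]),
    integral_const_mul, setIntegral_Ioo_zero_one_log]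
  norm_num

lemma integral_comp_eq_zero_of_isUniform {Λ : Ω → ℝ} (hΛ : AEMeasurable Λ μ)
    (hΛlaw : pdf.IsUniform Λ (Set.Ioo 0 (2 * π)) μ)
    {g : ℝ → ℝ} (hg : Continuous g) (hg₀ : ∫ y in 0..2 * π, g y = 0) :
    ∫ x, g (Λ x) ∂μ = 0 := by
  rw [← integral_map hΛ hg.aestronglyMeasurable, hΛlaw, ProbabilityTheory.cond,
    integral_smul_measure,
    ← integral_Ioc_eq_integral_Ioo, ← intervalIntegral.integral_of_le (by positivity), hg₀,
    smul_zero]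

lemma integral_cos_add_eq_zero_of_indepFun [IsFiniteMeasure μ] {A L : Ω → ℝ}
    (hA : AEMeasurable A μ) (hL : AEMeasurable L μ) (hAL : IndepFun A L μ)
    (hcos : ∫ x, cos (L x) ∂μ = 0) (hsin : ∫ x, sin (L x) ∂μ = 0) :
    ∫ x, cos (A x + L x) ∂μ = 0 := by
  have hcc : ∫ x, cos (A x) * cos (L x) ∂μ = 0 := by
    rw [hAL.integral_fun_comp_mul_comp hA hL (by fun_prop) (by fun_prop), hcos, mul_zero]
  have hss : ∫ x, sin (A x) * sin (L x) ∂μ = 0 := by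
    rw [hAL.integral_fun_comp_mul_comp hA hL (by fun_prop) (by fun_prop), hsin, mul_zero]
  simp_rw [cos_add]
  rw [integral_sub (.of_bound (by fun_prop) 1 (ae_of_all _ fun x => ?_))
    (.of_bound (by fun_prop) 1 (ae_of_all _ fun x => ?_)), hcc, hss, sub_zero]
  all_goals
    rw [norm_mul]
    exact mul_le_one₀ (by simp [abs_cos_le_one, abs_sin_le_one]) (norm_nonneg _)
      (by simp [abs_cos_le_one, abs_sin_le_one])

lemma integral_cos_add_nat_mul_eq_zero_of_isUniform [IsFiniteMeasure μ] {A Λ : Ω → ℝ}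
    (hA : AEMeasurable A μ) (hΛ : AEMeasurable Λ μ)
    (hΛlaw : pdf.IsUniform Λ (Set.Ioo 0 (2 * π)) μ)
    (hAΛ : IndepFun A Λ μ) {n : ℕ} (hn : n ≠ 0) :
    ∫ x, cos (A x + n * Λ x) ∂μ = 0 :=
  integral_cos_add_eq_zero_of_indepFun hA (hΛ.const_mul _)
    (hAΛ.comp measurable_id (measurable_const_mul _))
    (integral_comp_eq_zero_of_isUniform hΛ hΛlaw (by fun_prop)
      (intervalIntegral_cos_nat_mul_zero_two_pi hn))
    (integral_comp_eq_zero_of_isUniform hΛ hΛlaw (by fun_prop)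
      (intervalIntegral_sin_nat_mul_zero_two_pi hn))

lemma integral_cos_add_mul_cos_add_of_isUniform [IsFiniteMeasure μ] {A B Λ : Ω → ℝ}
    (hA : AEMeasurable A μ) (hB : AEMeasurable B μ) (hΛ : AEMeasurable Λ μ)
    (hΛlaw : pdf.IsUniform Λ (Set.Ioo 0 (2 * π)) μ)
    (hABΛ : IndepFun (fun x => (A x, B x)) Λ μ) :
    ∫ x, cos (A x + Λ x) * cos (B x + Λ x) ∂μ = (∫ x, cos (A x - B x) ∂μ) / 2 := by
  have hprod (a b l : ℝ) : cos (a + l) * cos (b + l) = (cos (a - b) + cos (a + b + 2 * l)) / 2 := by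
    rw [show a - b = (a + l) - (b + l) by ring, show a + b + 2 * l = (a + l) + (b + l) by ring,
      cos_sub (a + l) (b + l), cos_add (a + l) (b + l)]
    ring
  have hdouble : ∫ x, cos (A x + B x + (2 : ℕ) * Λ x) ∂μ = 0 :=
    integral_cos_add_nat_mul_eq_zero_of_isUniform (hA.add hB) hΛ hΛlaw
      (hABΛ.comp (measurable_fst.add measurable_snd) measurable_id) two_ne_zero
  simp_rw [hprod]
  rw [integral_div, integral_add (.of_bound (by fun_prop) 1 (ae_of_all _ fun x => ?_))
    (.of_bound (by fun_prop) 1 (ae_of_all _ fun x => ?_))]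
  · push_cast at hdouble
    rw [hdouble, add_zero]
  all_goals simpa using abs_cos_le_one _

lemma integral_mul_cos_add_eq_zero_of_isUniform [IsFiniteMeasure μ] {R A Λ : Ω → ℝ}
    (hR : AEMeasurable R μ) (hA : AEMeasurable A μ) (hΛ : AEMeasurable Λ μ)
    (hΛlaw : pdf.IsUniform Λ (Set.Ioo 0 (2 * π)) μ)
    (hRAΛ : IndepFun R (fun x => (A x, Λ x)) μ) (hAΛ : IndepFun A Λ μ) :
    ∫ x, R x * cos (A x + Λ x) ∂μ = 0 := by
  have hcos : ∫ x, cos (A x + Λ x) ∂μ = 0 := by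
    simpa using integral_cos_add_nat_mul_eq_zero_of_isUniform hA hΛ hΛlaw hAΛ one_ne_zero
  simpa [hcos] using hRAΛ.integral_fun_comp_mul_comp (f := id) (g := fun p => cos (p.1 + p.2)) hR
    (hA.prodMk hΛ) aestronglyMeasurable_id (by fun_prop)

lemma integral_mul_cos_add_mul_mul_cos_add_of_isUniform [IsFiniteMeasure μ]
    {R A B Λ : Ω → ℝ} (hR : AEMeasurable R μ) (hA : AEMeasurable A μ) (hB : AEMeasurable B μ)
    (hΛ : AEMeasurable Λ μ)
    (hΛlaw : pdf.IsUniform Λ (Set.Ioo 0 (2 * π)) μ)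
    (hRABΛ : IndepFun R (fun x => (A x, B x, Λ x)) μ)
    (hABΛ : IndepFun (fun x => (A x, B x)) Λ μ) :
    ∫ x, R x * cos (A x + Λ x) * (R x * cos (B x + Λ x)) ∂μ
      = (∫ x, R x ^ 2 ∂μ) * (∫ x, cos (A x - B x) ∂μ) / 2 := by
  have hsplit := hRABΛ.integral_fun_comp_mul_comp (f := fun r => r ^ 2)
    (g := fun p => cos (p.1 + p.2.2) * cos (p.2.1 + p.2.2)) hR (hA.prodMk (hB.prodMk hΛ))
    (by fun_prop) (by fun_prop)
  simp only at hsplit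
  rw [mul_div_assoc, ← integral_cos_add_mul_cos_add_of_isUniform hA hB hΛ hΛlaw hABΛ,
    ← hsplit]
  congr 1 with x
  ring

lemma integral_mul_cos_add_sq_of_isUniform [IsFiniteMeasure μ] {R A Λ : Ω → ℝ}
    (hR : AEMeasurable R μ) (hA : AEMeasurable A μ) (hΛ : AEMeasurable Λ μ)
    (hΛlaw : pdf.IsUniform Λ (Set.Ioo 0 (2 * π)) μ)
    (hRAΛ : IndepFun R (fun x => (A x, Λ x)) μ) (hAΛ : IndepFun A Λ μ) :
    ∫ x, (R x * cos (A x + Λ x)) ^ 2 ∂μ = (∫ x, R x ^ 2 ∂μ) * μ.real Set.univ / 2 := by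
  simp_rw [sq (R _ * _)]
  rw [integral_mul_cos_add_mul_mul_cos_add_of_isUniform hR hA hA hΛ hΛlaw
    (hRAΛ.comp measurable_id (by fun_prop : Measurable fun p : ℝ × ℝ => (p.1, p.1, p.2)))
    (hAΛ.comp (by fun_prop : Measurable fun a : ℝ => (a, a)) measurable_id)]
  simp

lemma integral_cos_mul_of_indepFun_gaussianReal [IsProbabilityMeasure μ] {D W : Ω → ℝ}
    (hD : AEMeasurable D μ) (hW : AEMeasurable W μ) (hDW : IndepFun D W μ) {v : ℝ≥0}
    (hDlaw : μ.map D = gaussianReal 0 v) :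
    ∫ x, cos (D x * W x) ∂μ = ∫ x, exp (-(v * W x ^ 2) / 2) ∂μ := by
  have hfubini : ∫ x, cos (D x * W x) ∂μ = ∫ w, ∫ y, cos (y * w) ∂(μ.map D) ∂(μ.map W) := by
    rw [← integral_map (f := fun p : ℝ × ℝ => cos (p.1 * p.2)) (hD.prodMk hW) (by fun_prop),
      (indepFun_iff_map_prod_eq_prod_map_map hD hW).mp hDW, integral_prod_symm]
    exact .of_bound (by fun_prop) 1 (ae_of_all _ fun p => by simpa using abs_cos_le_one _)
  have hinner (w : ℝ) : ∫ y, cos (y * w) ∂gaussianReal 0 v = exp (-(v * w ^ 2) / 2) := by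
    simp_rw [mul_comm _ w]
    exact integral_cos_mul_gaussianReal v w
  simp_rw [hfubini, hDlaw, hinner]
  exact integral_map hW (by fun_prop)

end

/-- Mean, variance and cross-covariance of the spectral construction
`Y i = √(−2 ln V) · cos(Z i · W + Λ)` on a graph, where `V ~ Unif(0,1)`,
`Λ ~ Unif(0,2π)`, `W ~ F`, all independent, and `Z₁ − Z₂ ~ N(0, d)`. -/
theorem spectral_construction_moments
    {Ω : Type*} [MeasureSpace Ω] [IsProbabilityMeasure (ℙ : Measure Ω)]
    (V Λ W Z₁ Z₂ : Ω → ℝ)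
    (hVmeas : Measurable V) (hΛmeas : Measurable Λ) (hWmeas : Measurable W)
    (hZ₁meas : Measurable Z₁) (hZ₂meas : Measurable Z₂)
    -- V is uniform on (0,1)
    (hV : Measure.map V ℙ = volume.restrict (Set.Ioo (0 : ℝ) 1))
    -- Λ is uniform on (0, 2π)
    (hΛ : Measure.map Λ ℙ
      = (ENNReal.ofReal (2 * Real.pi))⁻¹ • volume.restrict (Set.Ioo (0 : ℝ) (2 * Real.pi)))
    -- mutual independence of V, Λ, W and the pair (Z₁, Z₂)
    (hIndepV : IndepFun V (fun x => (Λ x, W x, Z₁ x, Z₂ x)) ℙ)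
    (hIndepΛ : IndepFun Λ (fun x => (W x, Z₁ x, Z₂ x)) ℙ)
    (hIndepW : IndepFun W (fun x => (Z₁ x, Z₂ x)) ℙ)
    -- Z₁ − Z₂ is Gaussian with mean 0 and variance d
    (d : ℝ≥0) (hZ : Measure.map (fun x => Z₁ x - Z₂ x) ℙ = gaussianReal 0 d)
    (Y : Fin 2 → Ω → ℝ)
    (hY₁ : Y 0 = fun x => Real.sqrt (-2 * Real.log (V x)) * Real.cos (Z₁ x * W x + Λ x))
    (hY₂ : Y 1 = fun x => Real.sqrt (-2 * Real.log (V x)) * Real.cos (Z₂ x * W x + Λ x)) :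
    (∀ i, ∫ x, Y i x ∂ℙ = 0) ∧ (∀ i, ∫ x, (Y i x) ^ 2 ∂ℙ = 1) ∧
      ∫ x, Y 0 x * Y 1 x ∂ℙ = ∫ x, Real.exp (-((d : ℝ) * (W x) ^ 2) / 2) ∂ℙ := by
  set R : Ω → ℝ := fun x => √(-2 * log (V x))
  have hRmeas : AEMeasurable R ℙ := by fun_prop
  have hA₁ : AEMeasurable (fun x => Z₁ x * W x) ℙ := by fun_prop
  have hA₂ : AEMeasurable (fun x => Z₂ x * W x) ℙ := by fun_prop
  have hΛae : AEMeasurable Λ ℙ := hΛmeas.aemeasurable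
  have hRABΛ : IndepFun R (fun x => (Z₁ x * W x, Z₂ x * W x, Λ x)) ℙ :=
    hIndepV.comp (by fun_prop : Measurable fun v : ℝ => √(-2 * log v))
      (by fun_prop : Measurable fun q : ℝ × ℝ × ℝ × ℝ => (q.2.2.1 * q.2.1, q.2.2.2 * q.2.1, q.1))
  have hABΛ : IndepFun (fun x => (Z₁ x * W x, Z₂ x * W x)) Λ ℙ :=
    hIndepΛ.symm.comp (by fun_prop : Measurable fun q : ℝ × ℝ × ℝ => (q.2.1 * q.1, q.2.2 * q.1))
      measurable_id
  have hR₁ : IndepFun R (fun x => (Z₁ x * W x, Λ x)) ℙ :=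
    hRABΛ.comp measurable_id (by fun_prop : Measurable fun q : ℝ × ℝ × ℝ => (q.1, q.2.2))
  have hR₂ : IndepFun R (fun x => (Z₂ x * W x, Λ x)) ℙ :=
    hRABΛ.comp measurable_id (by fun_prop : Measurable fun q : ℝ × ℝ × ℝ => (q.2.1, q.2.2))
  have hA₁Λ : IndepFun (fun x => Z₁ x * W x) Λ ℙ := hABΛ.comp measurable_fst measurable_id
  have hA₂Λ : IndepFun (fun x => Z₂ x * W x) Λ ℙ := hABΛ.comp measurable_snd measurable_id
  have hR2 : ∫ x, R x ^ 2 = 2 := integral_sqrt_neg_two_mul_log_sq hVmeas.aemeasurable hV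
  have hDW : ∫ x, cos ((Z₁ x - Z₂ x) * W x) = ∫ x, exp (-(d * W x ^ 2) / 2) :=
    integral_cos_mul_of_indepFun_gaussianReal (by fun_prop) hWmeas.aemeasurable
      (hIndepW.comp measurable_id (measurable_fst.sub measurable_snd)).symm hZ
  have hΛu : pdf.IsUniform Λ (Set.Ioo 0 (2 * π)) ℙ := by
    rwa [pdf.IsUniform, ProbabilityTheory.cond, volume_Ioo, sub_zero]
  refine ⟨Fin.forall_fin_two.2 ⟨?_, ?_⟩, Fin.forall_fin_two.2 ⟨?_, ?_⟩, ?_⟩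
  · rw [hY₁]; exact integral_mul_cos_add_eq_zero_of_isUniform hRmeas hA₁ hΛae hΛu hR₁ hA₁Λ
  · rw [hY₂]; exact integral_mul_cos_add_eq_zero_of_isUniform hRmeas hA₂ hΛae hΛu hR₂ hA₂Λ
  · rw [hY₁, integral_mul_cos_add_sq_of_isUniform hRmeas hA₁ hΛae hΛu hR₁ hA₁Λ, hR2]; simp
  · rw [hY₂, integral_mul_cos_add_sq_of_isUniform hRmeas hA₂ hΛae hΛu hR₂ hA₂Λ, hR2]; simp
  · rw [hY₁, hY₂, integral_mul_cos_add_mul_mul_cos_add_of_isUniform hRmeas hA₁ hA₂ hΛae hΛu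
      hRABΛ hABΛ, hR2]
    simp_rw [← sub_mul, hDW]
    ring
end

section
/- If F has density a ω^{−2} exp(−a²/(4ω²)) / (2√π) on ℝ \ {0} (a > 0), then ∫_ℝ exp(−d ω²/2) dF(ω) = exp(−a √(d/2)) for all d ≥ 0. -/
/-!
Substituting `ω = a / (2u)` on the positive half-line (the integrand is even) turns the integral
into `π^{-1/2} ∫₀^∞ exp(-u² - b²/u²) du` with `b = a √(d/2) / 2`. That integral equals
`(√π / 2) e^{-2b}`: the substitution `t = u - b/u` shows `∫₀^∞ (1 + b/u²) e^{-(u - b/u)²} du = √π`,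
and the inversion `u ↦ b/u` shows that the two summands contribute equally.
-/

open MeasureTheory Real Set

section Substitutions

variable {E : Type*} [NormedAddCommGroup E] [NormedSpace ℝ E]

lemma image_const_div_Ioi_zero {c : ℝ} (hc : 0 < c) :
    (fun u : ℝ => c / u) '' Ioi 0 = Ioi 0 := by
  ext y
  constructor
  · rintro ⟨u, hu, rfl⟩
    exact div_pos hc hu
  · intro hy
    exact ⟨c / y, div_pos hc hy, div_div_cancel₀ hc.ne'⟩

lemma injOn_const_div_Ioi_zero {c : ℝ} (hc : 0 < c) :
    InjOn (fun u : ℝ => c / u) (Ioi 0) := by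
  intro u _ v _ h
  simpa only [div_div_cancel₀ hc.ne'] using congrArg (c / ·) h

lemma hasDerivAt_const_div (c : ℝ) {u : ℝ} (hu : u ≠ 0) :
    HasDerivAt (fun x : ℝ => c / x) (-(c / u ^ 2)) u := by
  simpa [div_eq_mul_inv] using (hasDerivAt_inv hu).const_mul c

lemma integral_Ioi_comp_const_div {c : ℝ} (hc : 0 < c) (f : ℝ → E) :
    ∫ u in Ioi 0, (c / u ^ 2) • f (c / u) = ∫ u in Ioi 0, f u := by
  have hderiv : ∀ u ∈ Ioi (0 : ℝ),
      HasDerivWithinAt (fun x : ℝ => c / x) (-(c / u ^ 2)) (Ioi 0) u :=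
    fun u hu => (hasDerivAt_const_div c (ne_of_gt hu)).hasDerivWithinAt
  have h := integral_image_eq_integral_abs_deriv_smul measurableSet_Ioi hderiv
    (injOn_const_div_Ioi_zero hc) f
  rw [image_const_div_Ioi_zero hc] at h
  rw [h]
  refine setIntegral_congr_fun measurableSet_Ioi fun u (hu : 0 < u) => ?_
  rw [abs_neg, abs_of_pos (by positivity)]

lemma image_sub_const_div_Ioi_zero {b : ℝ} (hb : 0 < b) :
    (fun u : ℝ => u - b / u) '' Ioi 0 = univ := by
  refine eq_univ_of_forall fun t => ?_
  -- the positive root of `u² - t u - b = 0`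
  set s := √(t ^ 2 + 4 * b)
  have hs_sq : s ^ 2 = t ^ 2 + 4 * b := sq_sqrt (by positivity)
  have hts : 0 < t + s := by nlinarith [sqrt_nonneg (t ^ 2 + 4 * b)]
  refine ⟨(t + s) / 2, half_pos hts, ?_⟩
  field_simp
  linear_combination hs_sq

lemma injOn_sub_const_div_Ioi_zero {b : ℝ} (hb : 0 < b) :
    InjOn (fun u : ℝ => u - b / u) (Ioi 0) := by
  intro u (hu : 0 < u) v (hv : 0 < v) h
  field_simp at h
  have key : (u - v) * (u * v + b) = 0 := by linear_combination h
  rcases mul_eq_zero.mp key with h | h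
  · linarith
  · nlinarith [mul_pos hu hv]

lemma hasDerivAt_sub_const_div (b : ℝ) {u : ℝ} (hu : u ≠ 0) :
    HasDerivAt (fun x : ℝ => x - b / x) (1 + b / u ^ 2) u := by
  simpa only [sub_neg_eq_add] using (hasDerivAt_id' u).fun_sub (hasDerivAt_const_div b hu)

lemma hasDerivWithinAt_sub_const_div (b : ℝ) :
    ∀ u ∈ Ioi (0 : ℝ),
      HasDerivWithinAt (fun x : ℝ => x - b / x) (1 + b / u ^ 2) (Ioi 0) u :=
  fun _ hu => (hasDerivAt_sub_const_div b (ne_of_gt hu)).hasDerivWithinAt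

lemma abs_one_add_div_sq {b : ℝ} (hb : 0 ≤ b) (u : ℝ) : |1 + b / u ^ 2| = 1 + b / u ^ 2 :=
  abs_of_pos (by positivity)

lemma integral_Ioi_comp_sub_const_div {b : ℝ} (hb : 0 < b) (g : ℝ → E) :
    ∫ u in Ioi 0, (1 + b / u ^ 2) • g (u - b / u) = ∫ t, g t := by
  have h := integral_image_eq_integral_abs_deriv_smul measurableSet_Ioi
    (hasDerivWithinAt_sub_const_div b) (injOn_sub_const_div_Ioi_zero hb) g
  rw [image_sub_const_div_Ioi_zero hb, setIntegral_univ] at h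
  simp only [h, abs_one_add_div_sq hb.le]

lemma integrableOn_Ioi_comp_sub_const_div_iff {b : ℝ} (hb : 0 < b) (g : ℝ → E) :
    IntegrableOn (fun u => (1 + b / u ^ 2) • g (u - b / u)) (Ioi 0) ↔ Integrable g := by
  have h := integrableOn_image_iff_integrableOn_abs_deriv_smul measurableSet_Ioi
    (hasDerivWithinAt_sub_const_div b) (injOn_sub_const_div_Ioi_zero hb) g
  rw [image_sub_const_div_Ioi_zero hb, integrableOn_univ] at h
  simp only [h, abs_one_add_div_sq hb.le]

end Substitutions

lemma integral_eq_two_mul_integral_Ioi_of_abs {f : ℝ → ℝ} (hf : ∀ x, f |x| = f x) :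
    ∫ x, f x = 2 * ∫ x in Ioi 0, f x := by
  simpa only [hf] using integral_comp_abs (f := f)

lemma integral_Ioi_exp_neg_sq_sub_div_sq {b : ℝ} (hb : 0 ≤ b) :
    ∫ u in Ioi 0, exp (-u ^ 2 - b ^ 2 / u ^ 2) = √π / 2 * exp (-(2 * b)) := by
  rcases hb.eq_or_lt with rfl | hb
  · simpa using integral_gaussian_Ioi 1
  set G : ℝ → ℝ := fun u => exp (-(u - b / u) ^ 2)
  have hgauss : Integrable fun t : ℝ => exp (-t ^ 2) := by
    simpa using integrable_exp_neg_mul_sq one_pos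
  have hsum_int : IntegrableOn (fun u => (1 + b / u ^ 2) * G u) (Ioi 0) :=
    (integrableOn_Ioi_comp_sub_const_div_iff hb _).mpr hgauss
  have hsum : ∫ u in Ioi 0, (1 + b / u ^ 2) * G u = √π := by
    simpa using (integral_Ioi_comp_sub_const_div hb fun t => exp (-t ^ 2)).trans
      (by simpa using integral_gaussian 1)
  have hG_int : IntegrableOn G (Ioi 0) := by
    refine hsum_int.mono' (by fun_prop) (Filter.Eventually.of_forall fun u => ?_)
    rw [norm_of_nonneg (exp_pos _).le]
    exact le_mul_of_one_le_left (exp_pos _).le (by simp only [le_add_iff_nonneg_right]; positivity)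
  -- `G` is invariant under `u ↦ b / u`, which exchanges the two summands of `hsum`
  have hsymm : ∫ u in Ioi 0, b / u ^ 2 * G u = ∫ u in Ioi 0, G u := by
    rw [← integral_Ioi_comp_const_div hb G]
    refine setIntegral_congr_fun measurableSet_Ioi fun u _ => ?_
    simp only [G, smul_eq_mul, div_div_cancel₀ hb.ne']
    ring_nf
  have hrest_int : IntegrableOn (fun u => b / u ^ 2 * G u) (Ioi 0) :=
    (hsum_int.sub hG_int).congr_fun (fun u _ => by simp only [Pi.sub_apply]; ring)
      measurableSet_Ioi
  have hhalf : ∫ u in Ioi 0, G u = √π / 2 := by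
    have hsplit := integral_add hG_int hrest_int
    simp only [← one_add_mul, hsum, hsymm] at hsplit
    linarith
  have hfactor : ∀ u ∈ Ioi (0 : ℝ), exp (-u ^ 2 - b ^ 2 / u ^ 2) = exp (-(2 * b)) * G u := by
    intro u (hu : 0 < u)
    rw [← exp_add]
    congr 1
    field_simp
    ring
  rw [setIntegral_congr_fun measurableSet_Ioi hfactor, integral_const_mul, hhalf, mul_comm]

lemma stable_density_comp_const_div {a d u : ℝ} (ha : 0 < a) (hd : 0 ≤ d) (hu : 0 < u) :
    (a / 2 / u ^ 2) • (exp (-d * (a / 2 / u) ^ 2 / 2) * (a * ((a / 2 / u) ^ 2)⁻¹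
        * exp (-a ^ 2 / (4 * (a / 2 / u) ^ 2)) / (2 * √π)))
      = (√π)⁻¹ * exp (-u ^ 2 - (a * √(d / 2) / 2) ^ 2 / u ^ 2) := by
  have hb_sq : (a * √(d / 2) / 2) ^ 2 = a ^ 2 * d / 8 := by
    rw [div_pow, mul_pow, sq_sqrt (by positivity)]
    ring
  have hpi : √π ≠ 0 := (sqrt_pos.mpr pi_pos).ne'
  rw [hb_sq, smul_eq_mul, sub_eq_add_neg, add_comm, exp_add]
  field_simp
  ring_nf

/-- Entry 8 of Table 1: the spectral density `a ω^{−2} exp(−a²/(4ω²))/(2√π)` yields the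
stable correlation `C(d) = exp(−a√(d/2))`. -/
theorem stable_spectral_measure
    (a : ℝ) (ha : 0 < a) (d : ℝ) (hd : 0 ≤ d) :
    ∫ ω : ℝ, Real.exp (-d * ω ^ 2 / 2)
        * (a * (ω ^ 2)⁻¹ * Real.exp (-a ^ 2 / (4 * ω ^ 2)) / (2 * Real.sqrt Real.pi))
      = Real.exp (-a * Real.sqrt (d / 2)) := by
  have hb : 0 ≤ a * √(d / 2) / 2 := by positivity
  rw [integral_eq_two_mul_integral_Ioi_of_abs fun ω => by simp only [sq_abs],
    ← integral_Ioi_comp_const_div (half_pos ha),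
    setIntegral_congr_fun measurableSet_Ioi fun u hu => stable_density_comp_const_div ha hd hu,
    integral_const_mul, integral_Ioi_exp_neg_sq_sub_div_sq hb]
  field_simp
end

section
/- With the setup of the dilution of a random germ: for U₁, U₂ real random variables such that U₁ − U₂ is Gaussian with mean 0 and variance d > 0, independent of (ε, X), with X having positive density ϖ on ℝ, and Y_i = ε f(U_i − X)/√(ϖ(X)), one has E[Y₁ Y₂] = E[ψ_f(√d · Z)] where Z ~ N(0,1). -/
/-!
Since `ε² = 1`, `Y₁ Y₂ = f (U₁ - X) f (U₂ - X) / ϖ X`. As `X` is independent of `(U₁, U₂)`,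
Fubini lets us integrate out `X` first: against the law `ϖ(x) dx` the density cancels, and
translation invariance of Lebesgue measure turns `∫ f (u₁ - x) f (u₂ - x) dx` into
`ψ_f (u₁ - u₂)`. It remains to use that `U₁ - U₂` has the law of `√d Z`.
-/

open MeasureTheory ProbabilityTheory Real
open scoped NNReal

noncomputable def covariogram (f : ℝ → ℝ) (h : ℝ) : ℝ := ∫ x, f (x + h) * f x

theorem covariogram_congr_ae {f g : ℝ → ℝ} (hfg : f =ᵐ[volume] g) :
    covariogram f = covariogram g := by
  ext h
  have hshift : (fun x => f (x + h)) =ᵐ[volume] fun x => g (x + h) :=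
    (measurePreserving_add_right volume h).quasiMeasurePreserving.ae_eq_comp hfg
  exact integral_congr_ae (hshift.mul hfg)

theorem measurable_covariogram {f : ℝ → ℝ} (hf : AEStronglyMeasurable f volume) :
    Measurable (covariogram f) := by
  rw [covariogram_congr_ae hf.ae_eq_mk]
  have hF := hf.stronglyMeasurable_mk
  exact (StronglyMeasurable.integral_prod_right'
    ((hF.comp_measurable (measurable_snd.add measurable_fst)).mul
      (hF.comp_measurable measurable_snd))).measurable

theorem integral_comp_sub_mul_comp_sub (f : ℝ → ℝ) (a b : ℝ) :
    ∫ x, f (a - x) * f (b - x) = covariogram f (a - b) := by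
  rw [covariogram, ← integral_sub_left_eq_self _ volume b]
  congr 1 with x
  congr 2 <;> ring

theorem integrable_comp_sub_mul_comp_sub {f : ℝ → ℝ} (hf : MemLp f 2 volume) (a b : ℝ) :
    Integrable (fun x => f (a - x) * f (b - x)) volume :=
  (hf.comp_measurePreserving (Measure.measurePreserving_sub_left volume a)).integrable_mul
    (hf.comp_measurePreserving (Measure.measurePreserving_sub_left volume b))

theorem covariogram_le_integral_sq {f : ℝ → ℝ} (hf : MemLp f 2 volume) (h : ℝ) :
    covariogram f h ≤ ∫ x, f x ^ 2 := by
  have hshift : MemLp (fun x => f (x + h)) 2 volume :=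
    hf.comp_measurePreserving (measurePreserving_add_right volume h)
  calc covariogram f h ≤ ∫ x, (f (x + h) ^ 2 + f x ^ 2) / 2 := by
        refine integral_mono (hshift.integrable_mul hf)
          ((hshift.integrable_sq.add hf.integrable_sq).div_const 2) fun x => ?_
        nlinarith [two_mul_le_add_sq (f (x + h)) (f x)]
    _ = ∫ x, f x ^ 2 := by
        rw [integral_div, integral_add hshift.integrable_sq hf.integrable_sq,
          integral_add_right_eq_self (fun x => f x ^ 2) h]
        ring

section withDensity

variable {α : Type*} [MeasurableSpace α] {μ : Measure α} {w : α → ℝ}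

theorem integral_div_withDensity_ofReal (hw : Measurable w) (hw_pos : ∀ x, 0 < w x)
    (g : α → ℝ) :
    ∫ x, g x / w x ∂μ.withDensity (fun x => ENNReal.ofReal (w x)) = ∫ x, g x ∂μ := by
  rw [integral_withDensity_eq_integral_toReal_smul hw.ennreal_ofReal
    (ae_of_all _ fun _ => ENNReal.ofReal_lt_top)]
  congr 1 with x
  rw [ENNReal.toReal_ofReal (hw_pos x).le, smul_eq_mul, mul_div_cancel₀ _ (hw_pos x).ne']

theorem integrable_div_withDensity_ofReal_iff (hw : Measurable w) (hw_pos : ∀ x, 0 < w x)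
    {g : α → ℝ} :
    Integrable (fun x => g x / w x) (μ.withDensity (fun x => ENNReal.ofReal (w x))) ↔
      Integrable g μ := by
  rw [integrable_withDensity_iff hw.ennreal_ofReal (ae_of_all _ fun _ => ENNReal.ofReal_lt_top)]
  refine integrable_congr (ae_of_all _ fun x => ?_)
  simp only
  rw [ENNReal.toReal_ofReal (hw_pos x).le, div_mul_cancel₀ _ (hw_pos x).ne']

end withDensity

theorem quasiMeasurePreserving_sub_snd {α : Type*} [MeasurableSpace α] (μ : Measure α)
    {ν : Measure ℝ} [SFinite ν] (hν : ν ≪ volume) {g : α → ℝ} (hg : Measurable g) :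
    Measure.QuasiMeasurePreserving (fun p : α × ℝ => g p.1 - p.2) (μ.prod ν) volume := by
  have hmeas : Measurable (fun p : α × ℝ => g p.1 - p.2) :=
    (hg.comp measurable_fst).sub measurable_snd
  refine ⟨hmeas, Measure.AbsolutelyContinuous.mk fun s hs hs0 => ?_⟩
  rw [Measure.map_apply hmeas hs, Measure.measure_prod_null (hmeas hs)]
  refine ae_of_all _ fun a => hν ?_
  change volume ((fun x => g a - x) ⁻¹' s) = 0
  rwa [(Measure.measurePreserving_sub_left volume (g a)).measure_preimage hs.nullMeasurableSet]

noncomputable def dilutionKernel (f ϖ : ℝ → ℝ) (p : (ℝ × ℝ) × ℝ) : ℝ :=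
  f (p.1.1 - p.2) * f (p.1.2 - p.2) / ϖ p.2

section dilutionKernel

variable {f ϖ : ℝ → ℝ} {μ : Measure (ℝ × ℝ)}

theorem integrable_dilutionKernel [IsFiniteMeasure μ] (hf : MemLp f 2 volume)
    (hϖ : Measurable ϖ) (hϖ_pos : ∀ x, 0 < ϖ x) :
    Integrable (dilutionKernel f ϖ)
      (μ.prod (volume.withDensity fun x => ENNReal.ofReal (ϖ x))) := by
  have hν : volume.withDensity (fun x => ENNReal.ofReal (ϖ x)) ≪ volume :=
    withDensity_absolutelyContinuous _ _
  -- `f` is only a.e. measurable; composing with `(u, x) ↦ uᵢ - x` is harmless since that map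
  -- pulls Lebesgue-null sets back to null sets.
  have hmeas : AEStronglyMeasurable (dilutionKernel f ϖ)
      (μ.prod (volume.withDensity fun x => ENNReal.ofReal (ϖ x))) :=
    ((hf.1.comp_quasiMeasurePreserving (quasiMeasurePreserving_sub_snd μ hν measurable_fst)).mul
      (hf.1.comp_quasiMeasurePreserving (quasiMeasurePreserving_sub_snd μ hν measurable_snd))).div₀
      (hϖ.comp measurable_snd).aestronglyMeasurable
  refine (integrable_prod_iff hmeas).2 ⟨ae_of_all _ fun u =>
    (integrable_div_withDensity_ofReal_iff hϖ hϖ_pos).2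
      (integrable_comp_sub_mul_comp_sub hf u.1 u.2), ?_⟩
  refine Integrable.mono' (integrable_const (∫ x, f x ^ 2)) hmeas.norm.integral_prod_right'
    (ae_of_all _ fun u => ?_)
  have hnorm : ∀ x, ‖dilutionKernel f ϖ (u, x)‖ = |f (u.1 - x)| * |f (u.2 - x)| / ϖ x := by
    intro x
    rw [dilutionKernel, norm_div, norm_mul, Real.norm_of_nonneg (hϖ_pos x).le]
    rfl
  simp_rw [hnorm]
  rw [integral_div_withDensity_ofReal hϖ hϖ_pos,
    Real.norm_of_nonneg (integral_nonneg fun x => by positivity)]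
  calc ∫ x, |f (u.1 - x)| * |f (u.2 - x)| = covariogram |f| (u.1 - u.2) :=
        integral_comp_sub_mul_comp_sub |f| u.1 u.2
    _ ≤ ∫ x, |f x| ^ 2 := covariogram_le_integral_sq hf.abs _
    _ = ∫ x, f x ^ 2 := by simp only [sq_abs]

theorem integral_dilutionKernel [IsFiniteMeasure μ] (hf : MemLp f 2 volume)
    (hϖ : Measurable ϖ) (hϖ_pos : ∀ x, 0 < ϖ x) :
    ∫ p, dilutionKernel f ϖ p ∂(μ.prod (volume.withDensity fun x => ENNReal.ofReal (ϖ x))) =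
      ∫ u, covariogram f (u.1 - u.2) ∂μ := by
  rw [integral_prod _ (integrable_dilutionKernel hf hϖ hϖ_pos)]
  congr 1 with u
  rw [← integral_comp_sub_mul_comp_sub]
  exact integral_div_withDensity_ofReal hϖ hϖ_pos _

end dilutionKernel

theorem ae_sq_eq_one_of_map_eq_rademacher {Ω : Type*} [MeasurableSpace Ω] {P : Measure Ω}
    {ε : Ω → ℝ} (hε : Measurable ε)
    (hlaw : P.map ε = (2⁻¹ : ENNReal) • (Measure.dirac (1 : ℝ) + Measure.dirac (-1 : ℝ))) :
    ∀ᵐ ω ∂P, ε ω ^ 2 = 1 := by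
  refine ae_of_ae_map (p := fun x => x ^ 2 = 1) hε.aemeasurable ?_
  have hs : MeasurableSet {x : ℝ | x ^ 2 = 1} :=
    (measurable_id.pow_const 2) (measurableSet_singleton 1)
  rw [hlaw]
  refine Measure.ae_smul_measure (ae_add_measure_iff.2 ⟨?_, ?_⟩) _ <;>
    rw [ae_dirac_iff hs] <;> norm_num

theorem integral_gaussianReal_eq_integral_sqrt_mul {g : ℝ → ℝ} (hg : Measurable g) (v : ℝ≥0) :
    ∫ x, g x ∂gaussianReal 0 v = ∫ z, g (√v * z) ∂gaussianReal 0 1 := by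
  have hmap : (gaussianReal 0 1).map (√v * ·) = gaussianReal 0 v := by
    rw [gaussianReal_map_const_mul, mul_zero, mul_one]
    congr
    exact Real.sq_sqrt v.coe_nonneg
  rw [← hmap, integral_map (measurable_const_mul _).aemeasurable hg.aestronglyMeasurable]

theorem random_germ_dilution_covariance_general
    {Ω : Type*} [MeasureSpace Ω] [IsProbabilityMeasure (ℙ : Measure Ω)]
    (ε X U₁ U₂ : Ω → ℝ)
    (hεmeas : Measurable ε) (hXmeas : Measurable X)
    (hU₁meas : Measurable U₁) (hU₂meas : Measurable U₂)
    -- ε is Rademacher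
    (hε : Measure.map ε ℙ = (2⁻¹ : ENNReal) • (Measure.dirac (1 : ℝ) + Measure.dirac (-1 : ℝ)))
    -- X has everywhere-positive density ϖ
    (ϖ : ℝ → ℝ) (hϖmeas : Measurable ϖ) (hϖpos : ∀ x, 0 < ϖ x)
    (hX : Measure.map X ℙ = volume.withDensity (fun x => ENNReal.ofReal (ϖ x)))
    -- (U₁, U₂) is independent of (ε, X), and ε is independent of X
    (hIndepU : IndepFun (fun x => (U₁ x, U₂ x)) (fun x => (ε x, X x)) ℙ)
    -- U₁ − U₂ is Gaussian with mean 0 and variance d > 0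
    (d : ℝ≥0)
    (hU : Measure.map (fun x => U₁ x - U₂ x) ℙ = gaussianReal 0 d)
    (f : ℝ → ℝ) (hf : MemLp f 2 volume)
    (ψ : ℝ → ℝ) (hψ : ∀ h : ℝ, ψ h = ∫ x, f (x + h) * f x)
    (Y₁ Y₂ : Ω → ℝ)
    (hY₁ : Y₁ = fun x => ε x * f (U₁ x - X x) / Real.sqrt (ϖ (X x)))
    (hY₂ : Y₂ = fun x => ε x * f (U₂ x - X x) / Real.sqrt (ϖ (X x))) :
    ∫ x, Y₁ x * Y₂ x ∂ℙ = ∫ z, ψ (Real.sqrt d * z) ∂(gaussianReal 0 1) := by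
  obtain rfl : ψ = covariogram f := funext hψ
  have hV : Measurable fun ω => (U₁ ω, U₂ ω) := hU₁meas.prodMk hU₂meas
  have hVX : Measurable fun ω => ((U₁ ω, U₂ ω), X ω) := hV.prodMk hXmeas
  have hlaw : Measure.map (fun ω => ((U₁ ω, U₂ ω), X ω)) ℙ =
      (Measure.map (fun ω => (U₁ ω, U₂ ω)) ℙ).prod
        (volume.withDensity fun x => ENNReal.ofReal (ϖ x)) := by
    rw [← hX]
    exact (indepFun_iff_map_prod_eq_prod_map_map hV.aemeasurable hXmeas.aemeasurable).1
      (hIndepU.comp measurable_id measurable_snd)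
  have hY : ∀ᵐ ω ∂ℙ, Y₁ ω * Y₂ ω = dilutionKernel f ϖ ((U₁ ω, U₂ ω), X ω) := by
    filter_upwards [ae_sq_eq_one_of_map_eq_rademacher hεmeas hε] with ω hε₂
    rw [hY₁, hY₂, dilutionKernel, div_mul_div_comm, mul_mul_mul_comm, ← sq, hε₂, one_mul,
      Real.mul_self_sqrt (hϖpos _).le]
  have hψmeas : Measurable (covariogram f) := measurable_covariogram hf.1
  calc ∫ ω, Y₁ ω * Y₂ ω = ∫ ω, dilutionKernel f ϖ ((U₁ ω, U₂ ω), X ω) := integral_congr_ae hY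
    _ = ∫ p, dilutionKernel f ϖ p ∂Measure.map (fun ω => ((U₁ ω, U₂ ω), X ω)) ℙ :=
      (integral_map hVX.aemeasurable (hlaw ▸ (integrable_dilutionKernel hf hϖmeas hϖpos).1)).symm
    _ = ∫ u, covariogram f (u.1 - u.2) ∂Measure.map (fun ω => (U₁ ω, U₂ ω)) ℙ := by
      rw [hlaw, integral_dilutionKernel hf hϖmeas hϖpos]
    _ = ∫ ω, covariogram f (U₁ ω - U₂ ω) :=
      integral_map hV.aemeasurable
        (hψmeas.comp (measurable_fst.sub measurable_snd)).aestronglyMeasurable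
    _ = ∫ h, covariogram f h ∂gaussianReal 0 d := by
      rw [← hU, integral_map (φ := fun ω => U₁ ω - U₂ ω) (hU₁meas.sub hU₂meas).aemeasurable
        hψmeas.aestronglyMeasurable]
    _ = ∫ z, covariogram f (√d * z) ∂gaussianReal 0 1 :=
      integral_gaussianReal_eq_integral_sqrt_mul hψmeas d

/-- Covariance of the dilution-of-a-random-germ construction: with
`Y_i = ε f(U_i − X)/√(ϖ(X))`, `U₁ − U₂ ~ N(0, d)` independent of `(ε, X)`,
one has `E[Y₁Y₂] = E[ψ_f(√d Z)]` for `Z` standard Gaussian. -/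
theorem random_germ_dilution_covariance
    {Ω : Type*} [MeasureSpace Ω] [IsProbabilityMeasure (ℙ : Measure Ω)]
    (ε X U₁ U₂ : Ω → ℝ)
    (hεmeas : Measurable ε) (hXmeas : Measurable X)
    (hU₁meas : Measurable U₁) (hU₂meas : Measurable U₂)
    -- ε is Rademacher
    (hε : Measure.map ε ℙ = (2⁻¹ : ENNReal) • (Measure.dirac (1 : ℝ) + Measure.dirac (-1 : ℝ)))
    -- X has everywhere-positive density ϖ
    (ϖ : ℝ → ℝ) (hϖmeas : Measurable ϖ) (hϖpos : ∀ x, 0 < ϖ x)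
    (hX : Measure.map X ℙ = volume.withDensity (fun x => ENNReal.ofReal (ϖ x)))
    -- (U₁, U₂) is independent of (ε, X), and ε is independent of X
    (hIndepU : IndepFun (fun x => (U₁ x, U₂ x)) (fun x => (ε x, X x)) ℙ)
    (hIndepεX : IndepFun ε X ℙ)
    -- U₁ − U₂ is Gaussian with mean 0 and variance d > 0
    (d : ℝ≥0) (hd : 0 < d)
    (hU : Measure.map (fun x => U₁ x - U₂ x) ℙ = gaussianReal 0 d)
    (f : ℝ → ℝ) (hf : MemLp f 2 volume)
    (ψ : ℝ → ℝ) (hψ : ∀ h : ℝ, ψ h = ∫ x, f (x + h) * f x)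
    (Y₁ Y₂ : Ω → ℝ)
    (hY₁ : Y₁ = fun x => ε x * f (U₁ x - X x) / Real.sqrt (ϖ (X x)))
    (hY₂ : Y₂ = fun x => ε x * f (U₂ x - X x) / Real.sqrt (ϖ (X x))) :
    ∫ x, Y₁ x * Y₂ x ∂ℙ = ∫ z, ψ (Real.sqrt d * z) ∂(gaussianReal 0 1) :=
  random_germ_dilution_covariance_general ε X U₁ U₂ hεmeas hXmeas hU₁meas hU₂meas hε ϖ hϖmeas hϖpos
    hX hIndepU d hU f hf ψ hψ Y₁ Y₂ hY₁ hY₂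
end

section
/- Let W and Z be independent real random variables with Z standard Gaussian and W almost surely nonzero, and let d > 0. Then the random variable ρ = cos(W Z √d) satisfies |ρ| < 1 almost surely, and for each positive integer ν, E[ρ^ν] = 2^{1−ν} Σ_{κ=0}^{⌊(ν−1)/2⌋} C(ν,κ) E[exp(−(ν−2κ)² W² d / 2)] + (ν even) · ν! / (2^ν ((ν/2)!)²). -/
open MeasureTheory ProbabilityTheory Real
open scoped ENNReal NNReal


lemma gauss_cos (a : ℝ) : ∫ z, Real.cos (a * z) ∂(gaussianReal 0 1) = Real.exp (-a^2/2) := by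
  rw [gaussianReal_of_var_ne_zero 0 one_ne_zero]
  have hpdf : gaussianPDF 0 1 = fun x => ((Real.toNNReal (gaussianPDFReal 0 1 x)) : ℝ≥0∞) := rfl
  rw [hpdf, integral_withDensity_eq_integral_smul
    ((measurable_gaussianPDFReal 0 1).real_toNNReal) _]
  have hsq : Real.sqrt (2*π) ≠ 0 := by positivity
  have hre : ∀ x : ℝ, (Real.toNNReal (gaussianPDFReal 0 1 x)) • Real.cos (a * x)
      = ((((Real.sqrt (2*π) : ℝ) : ℂ))⁻¹
          * Complex.exp (-(1/2 : ℂ) * (x:ℂ)^2 + ((a:ℂ)*Complex.I) * (x:ℂ) + 0)).re := by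
    intro x
    have h1 : -(1/2 : ℂ) * (x:ℂ)^2 + ((a:ℂ)*Complex.I) * (x:ℂ) + 0
        = ((-(x^2)/2 : ℝ) : ℂ) + ((a*x : ℝ) : ℂ) * Complex.I := by
      push_cast; ring
    rw [h1, Complex.exp_add, ← Complex.ofReal_exp, ← Complex.ofReal_inv,
      Complex.re_ofReal_mul, Complex.re_ofReal_mul, Complex.exp_ofReal_mul_I_re]
    have : gaussianPDFReal 0 1 x = (Real.sqrt (2*π))⁻¹ * Real.exp (-(x^2)/2) := by
      simp [gaussianPDFReal]
    rw [NNReal.smul_def, Real.coe_toNNReal _ (gaussianPDFReal_nonneg 0 1 x), this,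
      smul_eq_mul]
    ring
  simp_rw [hre]
  have hint := integral_re (μ := (volume : Measure ℝ))
    ((integrable_cexp_quadratic (b := (1/2 : ℂ)) (by norm_num) ((a:ℂ)*Complex.I) 0).const_mul
      (((Real.sqrt (2*π) : ℝ) : ℂ))⁻¹)
  simp only [RCLike.re_to_complex] at hint
  rw [hint, MeasureTheory.integral_const_mul]
  have := integral_cexp_quadratic (b := -(1/2 : ℂ)) (by norm_num) ((a:ℂ)*Complex.I) 0
  rw [this]
  have h3 : ((π : ℂ) / -(-(1/2))) ^ (1/2 : ℂ) = ((Real.sqrt (2*π) : ℝ) : ℂ) := by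
    have : ((π : ℂ) / -(-(1/2 : ℂ))) = ((2*π : ℝ) : ℂ) := by push_cast; ring
    rw [this, show (1/2:ℂ) = ((1/2:ℝ):ℂ) by norm_num,
      ← Complex.ofReal_cpow (by positivity : (0:ℝ) ≤ 2*π), Real.sqrt_eq_rpow]
  have h4 : (0 : ℂ) - ((a:ℂ)*Complex.I)^2 / (4 * -(1/2)) = ((-a^2/2 : ℝ) : ℂ) := by
    push_cast
    rw [mul_pow, Complex.I_sq]
    ring
  rw [h3, h4, ← Complex.ofReal_exp]
  rw [← Complex.ofReal_inv, ← Complex.ofReal_mul, ← Complex.ofReal_mul, Complex.ofReal_re,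
    ← mul_assoc, inv_mul_cancel₀ hsq, one_mul]

lemma cos_pow_expand (t : ℝ) (ν : ℕ) :
    (2:ℝ)^ν * Real.cos t ^ ν
      = ∑ k ∈ Finset.range (ν+1), (ν.choose k : ℝ) * Real.cos (((ν:ℝ) - 2*k) * t) := by
  have key : ((2:ℂ) * Complex.cos t) ^ ν
      = ∑ k ∈ Finset.range (ν+1),
          Complex.exp ((((2*k:ℝ) - ν) * t : ℝ) * Complex.I) * (ν.choose k : ℂ) := by
    have hcos : (2:ℂ) * Complex.cos t
        = Complex.exp ((t:ℝ) * Complex.I) + Complex.exp ((-t:ℝ) * Complex.I) := by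
      rw [Complex.cos]
      push_cast
      ring_nf
    rw [hcos, add_pow]
    refine Finset.sum_congr rfl fun k hk => ?_
    simp only [Finset.mem_range] at hk
    have hk' : k ≤ ν := by omega
    rw [← Complex.exp_nat_mul, ← Complex.exp_nat_mul, ← Complex.exp_add]
    congr 2
    push_cast [Nat.cast_sub hk']
    ring
  have hre := congrArg Complex.re key
  have hL : (((2:ℂ) * Complex.cos t) ^ ν).re = (2:ℝ)^ν * Real.cos t ^ ν := by
    rw [show (2:ℂ) * Complex.cos t = (((2:ℝ) * Real.cos t : ℝ) : ℂ) by
      push_cast [Complex.ofReal_cos]; ring]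
    rw [← Complex.ofReal_pow, Complex.ofReal_re, mul_pow]
  rw [hL] at hre
  rw [hre, Complex.re_sum]
  refine Finset.sum_congr rfl fun k hk => ?_
  rw [show (Complex.exp ((((2*k:ℝ) - ν) * t : ℝ) * Complex.I) * (ν.choose k : ℂ))
      = ((ν.choose k : ℝ) : ℂ) * Complex.exp ((((2*k:ℝ) - ν) * t : ℝ) * Complex.I) by
    push_cast; ring]
  rw [Complex.re_ofReal_mul, Complex.exp_ofReal_mul_I_re]
  congr 1
  rw [show ((ν:ℝ) - 2*k) * t = -(((2*k:ℝ) - ν) * t) by ring, Real.cos_neg]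

lemma sum_reflect_aux (g : ℕ → ℝ) (ν h : ℕ) (hh : h ≤ ν + 1)
    (hg : ∀ k ≤ ν, g (ν - k) = g k) :
    ∑ k ∈ Finset.range (ν+1), g k
      = ∑ k ∈ Finset.range h, g k + ∑ k ∈ Finset.range (ν+1-h), g k := by
  rw [Finset.range_eq_Ico, ← Finset.sum_Ico_consecutive _ (Nat.zero_le h) hh,
    ← Finset.range_eq_Ico]
  congr 1
  calc ∑ k ∈ Finset.Ico h (ν+1), g k = ∑ k ∈ Finset.Ico h (ν+1), g (ν - k) := by
        refine Finset.sum_congr rfl fun k hk => ?_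
        simp only [Finset.mem_Ico] at hk
        exact (hg k (by omega)).symm
    _ = ∑ j ∈ Finset.Ico (ν+1-(ν+1)) (ν+1-h), g j := Finset.sum_Ico_reflect g h le_rfl
    _ = ∑ k ∈ Finset.range (ν+1-h), g k := by
        rw [Nat.sub_self, ← Finset.range_eq_Ico]

lemma sum_reflect_split (g : ℕ → ℝ) (ν : ℕ) (hν : 0 < ν) (hg : ∀ k ≤ ν, g (ν - k) = g k) :
    ∑ k ∈ Finset.range (ν+1), g k
      = 2 * ∑ k ∈ Finset.range ((ν-1)/2 + 1), g k + (if Even ν then g (ν/2) else 0) := by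
  rcases Nat.even_or_odd ν with he | ho
  · obtain ⟨m, hm⟩ := he
    have e1 : (ν-1)/2 + 1 = m := by omega
    have e2 : ν/2 = m := by omega
    rw [if_pos ⟨m, hm⟩, e1, e2, sum_reflect_aux g ν m (by omega) hg,
      show ν + 1 - m = m + 1 by omega, Finset.sum_range_succ]
    ring
  · obtain ⟨m, hm⟩ := ho
    have e1 : (ν-1)/2 + 1 = m + 1 := by omega
    rw [if_neg (by simp [Nat.even_iff]; omega), e1,
      sum_reflect_aux g ν (m+1) (by omega) hg, show ν + 1 - (m+1) = m + 1 by omega]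
    ring


lemma cos_moment {Ω : Type*} [MeasureSpace Ω] [IsProbabilityMeasure (ℙ : Measure Ω)]
    (W Z : Ω → ℝ) (hWmeas : Measurable W) (hZmeas : Measurable Z)
    (hZ : Measure.map Z ℙ = gaussianReal 0 1) (hIndep : IndepFun W Z ℙ)
    (d : ℝ) (hd : 0 < d) (m : ℝ) :
    ∫ x, Real.cos (m * (W x * Z x * Real.sqrt d)) ∂ℙ
      = ∫ x, Real.exp (-(m ^ 2 * W x ^ 2 * d) / 2) ∂ℙ := by
  have hmap : Measure.map (fun x => (W x, Z x)) ℙ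
      = (Measure.map W ℙ).prod (gaussianReal 0 1) := by
    rw [← hZ]
    exact (indepFun_iff_map_prod_eq_prod_map_map hWmeas.aemeasurable hZmeas.aemeasurable).mp
      hIndep
  have hmW : IsProbabilityMeasure (Measure.map W ℙ) :=
    Measure.isProbabilityMeasure_map hWmeas.aemeasurable
  have hfmeas : Measurable fun p : ℝ × ℝ => Real.cos (m * (p.1 * p.2 * Real.sqrt d)) :=
    (((measurable_fst.mul measurable_snd).mul_const _).const_mul m).cos
  have hL : ∫ x, Real.cos (m * (W x * Z x * Real.sqrt d)) ∂ℙ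
      = ∫ p : ℝ × ℝ, Real.cos (m * (p.1 * p.2 * Real.sqrt d))
          ∂((Measure.map W ℙ).prod (gaussianReal 0 1)) := by
    rw [← hmap, integral_map (hWmeas.prodMk hZmeas).aemeasurable hfmeas.aestronglyMeasurable]
  rw [hL]
  have hint : Integrable (fun p : ℝ × ℝ => Real.cos (m * (p.1 * p.2 * Real.sqrt d)))
      ((Measure.map W ℙ).prod (gaussianReal 0 1)) := by
    refine Integrable.mono' (integrable_const 1) hfmeas.aestronglyMeasurable ?_
    exact Filter.Eventually.of_forall fun p => by
      simpa using Real.abs_cos_le_one _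
  rw [MeasureTheory.integral_prod _ hint]
  have hinner : ∀ w : ℝ, (∫ z, Real.cos (m * (w * z * Real.sqrt d)) ∂(gaussianReal 0 1))
      = Real.exp (-(m ^ 2 * w ^ 2 * d) / 2) := by
    intro w
    have h1 : ∀ z : ℝ, m * (w * z * Real.sqrt d) = (m * w * Real.sqrt d) * z := fun z => by ring
    simp_rw [h1]
    rw [gauss_cos]
    have : (m * w * Real.sqrt d) ^ 2 = m ^ 2 * w ^ 2 * d := by
      rw [mul_pow, mul_pow, Real.sq_sqrt hd.le]
    rw [this]
  simp_rw [hinner]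
  rw [integral_map hWmeas.aemeasurable]
  exact (Measurable.aestronglyMeasurable (by fun_prop))


/-- Moments of `ρ = cos(W Z √d)` for independent `W` and standard Gaussian `Z`, with `W`
a.s. nonzero: `|ρ| < 1` a.s., and the power-reduction formula for `E[ρ^ν]`. -/
theorem cosine_mixture_moments
    {Ω : Type*} [MeasureSpace Ω] [IsProbabilityMeasure (ℙ : Measure Ω)]
    (W Z : Ω → ℝ) (hWmeas : Measurable W) (hZmeas : Measurable Z)
    (hZ : Measure.map Z ℙ = gaussianReal 0 1)
    (hIndep : IndepFun W Z ℙ)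
    (hW : ℙ {x | W x = 0} = 0)
    (d : ℝ) (hd : 0 < d)
    (ρ : Ω → ℝ) (hρ : ρ = fun x => Real.cos (W x * Z x * Real.sqrt d)) :
    (∀ᵐ x ∂ℙ, |ρ x| < 1) ∧
    ∀ ν : ℕ, 0 < ν →
      ∫ x, (ρ x) ^ ν ∂ℙ
        = (2 : ℝ) ^ ((1 : ℤ) - ν)
            * ∑ κ ∈ Finset.range ((ν - 1) / 2 + 1),
                (ν.choose κ : ℝ)
                  * ∫ x, Real.exp (-(((ν : ℝ) - 2 * κ) ^ 2 * (W x) ^ 2 * d) / 2) ∂ℙ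
          + (if Even ν then (ν.factorial : ℝ) / (2 ^ ν * ((ν / 2).factorial : ℝ) ^ 2) else 0) := by
  subst hρ
  have hmap : Measure.map (fun x => (W x, Z x)) ℙ
      = (Measure.map W ℙ).prod (gaussianReal 0 1) := by
    rw [← hZ]
    exact (indepFun_iff_map_prod_eq_prod_map_map hWmeas.aemeasurable hZmeas.aemeasurable).mp
      hIndep
  constructor
  · -- a.s. |ρ| < 1
    set S : Set (ℝ × ℝ) := {p : ℝ × ℝ | Real.sin (p.1 * p.2 * Real.sqrt d) = 0 ∧ p.1 ≠ 0}
      with hS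
    have hSmeas : MeasurableSet S := by
      apply MeasurableSet.inter
      · exact measurableSet_eq_fun
          (((measurable_fst.mul measurable_snd).mul_const _).sin) measurable_const
      · exact (measurableSet_eq_fun measurable_fst measurable_const).compl
    have hsubset : {x | ¬ |Real.cos (W x * Z x * Real.sqrt d)| < 1}
        ⊆ {x | W x = 0} ∪ (fun x => (W x, Z x)) ⁻¹' S := by
      intro x hx
      simp only [Set.mem_setOf_eq, not_lt] at hx
      have h1 : |Real.cos (W x * Z x * Real.sqrt d)| = 1 :=
        le_antisymm (Real.abs_cos_le_one _) hx
      have h2 : Real.sin (W x * Z x * Real.sqrt d) = 0 := by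
        have hc : Real.cos (W x * Z x * Real.sqrt d) ^ 2 = 1 := by
          rw [← sq_abs, h1, one_pow]
        have := Real.sin_sq_add_cos_sq (W x * Z x * Real.sqrt d)
        have hs : Real.sin (W x * Z x * Real.sqrt d) ^ 2 = 0 := by linarith
        exact pow_eq_zero_iff (n := 2) (by norm_num) |>.mp hs
      by_cases hWx : W x = 0
      · exact Or.inl hWx
      · exact Or.inr ⟨h2, hWx⟩
    have hnull : ℙ ((fun x => (W x, Z x)) ⁻¹' S) = 0 := by
      rw [← Measure.map_apply (hWmeas.prodMk hZmeas) hSmeas, hmap]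
      rw [Measure.measure_prod_null hSmeas]
      refine Filter.Eventually.of_forall fun w => ?_
      by_cases hw : w = 0
      · have hemp : Prod.mk w ⁻¹' S = ∅ := by
          ext z
          simp [hS, hw]
        simp [hemp]
      · have hcount : (Prod.mk w ⁻¹' S).Countable := by
          have : Prod.mk w ⁻¹' S ⊆ Set.range (fun n : ℤ => (n : ℝ) * π / (w * Real.sqrt d)) := by
            intro z hz
            obtain ⟨hsin, -⟩ := hz
            obtain ⟨n, hn⟩ := Real.sin_eq_zero_iff.mp hsin
            refine ⟨n, ?_⟩
            have hwd : w * Real.sqrt d ≠ 0 :=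
              mul_ne_zero hw (by positivity)
            field_simp
            rw [hn]
            ring
          exact Set.Countable.mono this (Set.countable_range _)
        exact gaussianReal_absolutelyContinuous 0 one_ne_zero (hcount.measure_zero (volume : Measure ℝ))
    rw [ae_iff]
    exact measure_mono_null hsubset (measure_union_null hW hnull)
  · -- moments
    intro ν hν
    set g : ℕ → ℝ := fun k => (ν.choose k : ℝ)
      * ∫ x, Real.exp (-(((ν : ℝ) - 2 * k) ^ 2 * (W x) ^ 2 * d) / 2) ∂ℙ with hg
    have hcosint : ∀ m : ℝ, Integrable
        (fun x => Real.cos (m * (W x * Z x * Real.sqrt d))) ℙ := by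
      intro m
      refine Integrable.mono' (integrable_const 1)
        (Measurable.aestronglyMeasurable (by fun_prop)) ?_
      exact Filter.Eventually.of_forall fun x => by simpa using Real.abs_cos_le_one _
    have key : (2:ℝ)^ν * ∫ x, Real.cos (W x * Z x * Real.sqrt d) ^ ν ∂ℙ
        = ∑ k ∈ Finset.range (ν+1), g k := by
      rw [← MeasureTheory.integral_const_mul]
      have e1 : ∀ x, (2:ℝ)^ν * Real.cos (W x * Z x * Real.sqrt d) ^ ν
          = ∑ k ∈ Finset.range (ν+1),
              (ν.choose k : ℝ) * Real.cos (((ν:ℝ) - 2*k) * (W x * Z x * Real.sqrt d)) :=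
        fun x => cos_pow_expand _ ν
      rw [integral_congr_ae (Filter.Eventually.of_forall e1),
        integral_finset_sum _ fun k _ => (hcosint _).const_mul _]
      refine Finset.sum_congr rfl fun k _ => ?_
      rw [MeasureTheory.integral_const_mul,
        cos_moment W Z hWmeas hZmeas hZ hIndep d hd ((ν:ℝ) - 2*k)]
    have hsym : ∀ k ≤ ν, g (ν - k) = g k := by
      intro k hk
      have hcast : ((ν:ℝ) - 2 * ((ν - k : ℕ) : ℝ)) ^ 2 = ((ν:ℝ) - 2 * k) ^ 2 := by
        rw [Nat.cast_sub hk]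
        ring
      simp only [hg, Nat.choose_symm hk, hcast]
    have hsplit := sum_reflect_split g ν hν hsym
    rw [hsplit] at key
    have hgmid : Even ν → g (ν / 2) = (ν.choose (ν/2) : ℝ) := by
      intro he
      have h0 : ((ν:ℝ) - 2 * ((ν/2 : ℕ) : ℝ)) = 0 := by
        obtain ⟨m, hm⟩ := he
        have : ν / 2 = m := by omega
        rw [this, hm]
        push_cast
        ring
      simp only [hg, h0]
      norm_num
    have h2ν : ((2:ℝ)^ν) ≠ 0 := by positivity
    have hzpow : (2:ℝ) ^ ((1 : ℤ) - ν) = 2 / (2:ℝ)^ν := by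
      rw [zpow_sub₀ (two_ne_zero), zpow_one, zpow_natCast]
    have hI : ∫ x, Real.cos (W x * Z x * Real.sqrt d) ^ ν ∂ℙ
        = (2 * ∑ k ∈ Finset.range ((ν-1)/2 + 1), g k
            + (if Even ν then g (ν/2) else 0)) / (2:ℝ)^ν := by
      field_simp
      linarith [key]
    rw [hI, hzpow]
    rcases Nat.even_or_odd ν with he | ho
    · rw [if_pos he, if_pos he, hgmid he]
      have hfact : (ν.choose (ν/2) : ℝ) * ((ν/2).factorial : ℝ)^2 = (ν.factorial : ℝ) := by
        obtain ⟨m, hm⟩ := he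
        have h := Nat.choose_mul_factorial_mul_factorial (show ν/2 ≤ ν by omega)
        rw [show ν - ν/2 = ν/2 by omega] at h
        have h' := congrArg (fun n : ℕ => (n : ℝ)) h
        push_cast at h'
        linear_combination h'
      have hf2 : ((ν/2).factorial : ℝ) ≠ 0 := Nat.cast_ne_zero.mpr (Nat.factorial_ne_zero _)
      rw [← hfact]
      field_simp
    · rw [if_neg (Nat.not_even_iff_odd.mpr ho), if_neg (Nat.not_even_iff_odd.mpr ho)]
      ring
end
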